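/- Let j ≥ 0 and let g_0, g_1, …, g_j be real numbers with g_j > g_{j-1} > … > g_0 > 0. Then for any real numbers v^0, v^1, …, v^{j+1}, setting Δv = Σ_{s=0}^{j} g_s (v^{s+1} − v^s) and Δ(v²) = Σ_{s=0}^{j} g_s ((v^{s+1})² − (v^s)²), one has v^{j+1} · Δv ≥ (1/2) Δ(v²) + (1/(2 g_j)) (Δv)². -/

import Mathlib

/-!
Write `Δₙ v = ∑_{s<n} g_s (v^{s+1} - v^s)` and
`Fₙ(c) = vⁿ Δₙ v - ½ Δₙ(v²) - (Δₙ v)² / (2c)`.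
Appending the term of weight `c = g_n` leaves `F(c)` unchanged: `F_{n+1}(g_n) = F_n(g_n)`.
Since `F_n(c)` increases with `c > 0` and the weights increase,
`F_{n+1}(g_n) = F_n(g_n) ≥ F_n(g_{n-1}) ≥ … ≥ F_0 = 0`.
-/

open Finset

lemma lt_apply_of_lt_apply_zero {α : Type*} [Preorder α] {a : α} {g : ℕ → α} {n : ℕ}
    (h0 : a < g 0) (hmono : ∀ s < n, g s ≤ g (s + 1)) : a < g n := by
  induction n with
  | zero => exact h0
  | succ n ih => exact (ih fun s hs => hmono s (by omega)).trans_le (hmono n n.lt_succ_self)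

namespace WeightedDifference

variable (g v : ℕ → ℝ) (n : ℕ)

noncomputable def weightedDiff : ℝ := ∑ s ∈ range n, g s * (v (s + 1) - v s)

noncomputable def gap (c : ℝ) : ℝ :=
  v n * weightedDiff g v n - 1 / 2 * weightedDiff g (fun s => v s ^ 2) n -
    1 / (2 * c) * weightedDiff g v n ^ 2

lemma gap_zero (c : ℝ) : gap g v 0 c = 0 := by
  simp [gap, weightedDiff]

variable {g v n}

lemma gap_succ_self (hg : g n ≠ 0) : gap g v (n + 1) (g n) = gap g v n (g n) := by
  simp only [gap, weightedDiff, sum_range_succ]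
  field_simp
  ring

lemma gap_mono {c c' : ℝ} (hc : 0 < c) (hcc' : c ≤ c') : gap g v n c ≤ gap g v n c' := by
  unfold gap
  gcongr

lemma gap_succ_nonneg (hg0 : 0 < g 0) (hmono : ∀ s < n, g s ≤ g (s + 1)) :
    0 ≤ gap g v (n + 1) (g n) := by
  induction n with
  | zero => rw [gap_succ_self hg0.ne', gap_zero]
  | succ n ih =>
    have hgn : 0 < g n := lt_apply_of_lt_apply_zero hg0 fun s hs => hmono s (by omega)
    rw [gap_succ_self (hgn.trans_le (hmono n n.lt_succ_self)).ne']
    exact (ih fun s hs => hmono s (by omega)).trans (gap_mono hgn (hmono n n.lt_succ_self))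

end WeightedDifference

theorem lemma1_first_inequality (j : ℕ) (g v : ℕ → ℝ)
    (hg0 : 0 < g 0) (hgmono : ∀ s, s < j → g s < g (s + 1)) :
    v (j + 1) * (∑ s ∈ Finset.range (j + 1), g s * (v (s + 1) - v s)) ≥
      (1 / 2) * (∑ s ∈ Finset.range (j + 1), g s * ((v (s + 1)) ^ 2 - (v s) ^ 2)) +
        (1 / (2 * g j)) * (∑ s ∈ Finset.range (j + 1), g s * (v (s + 1) - v s)) ^ 2 := by
  have h := WeightedDifference.gap_succ_nonneg (v := v) hg0 fun s hs => (hgmono s hs).le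
  unfold WeightedDifference.gap WeightedDifference.weightedDiff at h
  linarith
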